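/- arXiv:2512.20686 — 4 statements merged into one kernel-verified Lean document; each statement's English description precedes it below -/
import Mathlib

section
/- If the apportionment sequence of a two-party stationary divisor method with cut point c and votes p1 > p2 awards a seat to party 1 and then two consecutive seats to party 2, a contradiction arises; i.e., party 2 never receives two consecutive seats. -/
/-- Two-party stationary divisor method: party 2 (with fewer votes) never
receives two consecutive seats.  Formally, there are no nonnegative integers
`a1, a2` and cut point `c ∈ [0,1]` satisfying the three ratio inequalities that
would witness party 1 receiving a seat followed by two consecutive seats for
party 2. -/
theorem two_in_a_row_impossible (p1 p2 : ℕ) (hp2 : 0 < p2) (hp : p2 < p1) :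
    ¬ ∃ (a1 a2 : ℕ) (c : ℝ), 0 ≤ c ∧ c ≤ 1 ∧
      (p1 : ℝ) / ((a1 : ℝ) - 1 + c) > (p2 : ℝ) / ((a2 : ℝ) - 1 + c) ∧
      (p2 : ℝ) / ((a2 : ℝ) - 1 + c) > (p1 : ℝ) / ((a1 : ℝ) + c) ∧
      (p2 : ℝ) / ((a2 : ℝ) + c) > (p1 : ℝ) / ((a1 : ℝ) + c) := by
  rintro ⟨a1, a2, c, hc0, hc1, h1, h2, h3⟩
  have hp1 : (0:ℝ) < p1 := by exact_mod_cast hp2.trans hp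
  have hp2' : (0:ℝ) < p2 := by exact_mod_cast hp2
  have hpc : (p2:ℝ) < p1 := by exact_mod_cast hp
  have ha1 : (0:ℝ) ≤ (a1:ℝ) := Nat.cast_nonneg a1
  rcases lt_or_ge 0 ((a1:ℝ) + c) with hA | hA
  · have hPA : 0 < (p1:ℝ) / ((a1:ℝ) + c) := div_pos hp1 hA
    have h2pos : 0 < (p2:ℝ) / ((a2:ℝ) - 1 + c) := hPA.trans h2
    have hB : 0 < (a2:ℝ) - 1 + c := by
      rcases div_pos_iff.mp h2pos with ⟨_, h⟩ | ⟨h, _⟩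
      · exact h
      · linarith
    have h3pos : 0 < (p2:ℝ) / ((a2:ℝ) + c) := hPA.trans h3
    have hB2 : 0 < (a2:ℝ) + c := by linarith
    have h1pos : 0 < (p1:ℝ) / ((a1:ℝ) - 1 + c) := (div_pos hp2' hB).trans h1
    have hA1 : 0 < (a1:ℝ) - 1 + c := by
      rcases div_pos_iff.mp h1pos with ⟨_, h⟩ | ⟨h, _⟩
      · exact h
      · linarith
    have e1 : (p2:ℝ) * ((a1:ℝ) - 1 + c) < (p1:ℝ) * ((a2:ℝ) - 1 + c) :=
      (div_lt_div_iff₀ hB hA1).mp h1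
    have e3 : (p1:ℝ) * ((a2:ℝ) + c) < (p2:ℝ) * ((a1:ℝ) + c) :=
      (div_lt_div_iff₀ hA hB2).mp h3
    linarith
  · have hc : c = 0 := le_antisymm (by linarith) hc0
    have ha : (a1:ℝ) = 0 := by linarith
    rw [hc, ha] at h1 h2 h3
    simp at h1 h2 h3
    have hB : 0 < (a2:ℝ) - 1 := by
      rcases div_pos_iff.mp h2 with ⟨_, h⟩ | ⟨h, _⟩
      · exact h
      · linarith
    have hlhs : (p1:ℝ) / (-1:ℝ) < 0 := by rw [show ((p1:ℝ) / (-1:ℝ)) = -(p1:ℝ) by ring]; linarith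
    linarith
end

section
/- If the d'Hondt (c = 1) apportionment sequence for votes p is (s_1, s_2, s_3, ...), then the Adams (c = 0) apportionment sequence for p is (1, 2, ..., n, s_1, s_2, s_3, ...). -/
open ENNReal

/-- Number of seats party `i` holds after the first `h` seats of sequence `s`. -/
def alloc {n : ℕ} (s : ℕ → Fin n) (i : Fin n) (h : ℕ) : ℕ :=
  ((Finset.range h).filter (fun t => s t = i)).card

/-- `s` is the apportionment sequence of the stationary divisor method with cut
point `c` for votes `p`: each seat goes to the party maximizing `pᵢ/(aᵢ+c)`
(computed in `ℝ≥0∞`, so that `pᵢ/0 = ∞` encodes the Adams convention), with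
ties broken in favor of the smaller index. -/
def IsStationarySeq {n : ℕ} (p : Fin n → ℕ) (c : NNReal) (s : ℕ → Fin n) : Prop :=
  ∀ h : ℕ, ∀ j : Fin n,
    (p j : ℝ≥0∞) / ((alloc s j h : ℝ≥0∞) + (c : ℝ≥0∞)) <
        (p (s h) : ℝ≥0∞) / ((alloc s (s h) h : ℝ≥0∞) + (c : ℝ≥0∞)) ∨
    ((p (s h) : ℝ≥0∞) / ((alloc s (s h) h : ℝ≥0∞) + (c : ℝ≥0∞)) =
        (p j : ℝ≥0∞) / ((alloc s j h : ℝ≥0∞) + (c : ℝ≥0∞)) ∧ s h ≤ j)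

lemma alloc_succ {n : ℕ} (s : ℕ → Fin n) (i : Fin n) (h : ℕ) :
    alloc s i (h + 1) = alloc s i h + (if s h = i then 1 else 0) := by
  unfold alloc
  rw [Finset.range_add_one, Finset.filter_insert]
  split
  · rw [Finset.card_insert_of_notMem (by simp)]
  · simp

lemma winner_unique {n : ℕ} (r : Fin n → ℝ≥0∞) (a b : Fin n)
    (ha : ∀ j, r j < r a ∨ (r a = r j ∧ a ≤ j))
    (hb : ∀ j, r j < r b ∨ (r b = r j ∧ b ≤ j)) : a = b := by
  rcases ha b with h1 | ⟨h1, h1'⟩ <;> rcases hb a with h2 | ⟨h2, h2'⟩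
  · exact absurd (h1.trans h2) (lt_irrefl _)
  · exact absurd h1 (by rw [h2]; exact lt_irrefl _)
  · exact absurd h2 (by rw [h1]; exact lt_irrefl _)
  · exact le_antisymm h1' h2'

lemma alloc_of_id {n : ℕ} (s : ℕ → Fin n) (h : ℕ) (hh : h ≤ n)
    (hs : ∀ t, (ht : t < h) → s t = ⟨t, ht.trans_le hh⟩) (i : Fin n) :
    alloc s i h = if (i : ℕ) < h then 1 else 0 := by
  unfold alloc
  have : (Finset.range h).filter (fun t => s t = i)
      = (Finset.range h).filter (fun t => t = (i : ℕ)) := by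
    apply Finset.filter_congr
    intro t ht
    simp only [Finset.mem_range] at ht
    rw [hs t ht]
    simp [Fin.ext_iff, eq_comm]
  rw [this, Finset.filter_eq']
  by_cases hc : (i : ℕ) < h <;> simp [Finset.mem_range, hc]

/-- If `s1` is the d'Hondt (`c = 1`) sequence for votes `p`, then the Adams
(`c = 0`) sequence is `1, 2, …, n` followed by `s1`. -/
theorem adams_from_dhondt {n : ℕ} (hn : 0 < n) (p : Fin n → ℕ)
    (hpos : ∀ i, 0 < p i) (hmono : ∀ i j : Fin n, i ≤ j → p j ≤ p i)
    (s1 s0 : ℕ → Fin n)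
    (h1 : IsStationarySeq p 1 s1) (h0 : IsStationarySeq p 0 s0) :
    (∀ h : ℕ, (hh : h < n) → s0 h = ⟨h, hh⟩) ∧ (∀ h : ℕ, s0 (h + n) = s1 h) := by
  have part1 : ∀ h : ℕ, (hh : h < n) → s0 h = ⟨h, hh⟩ := by
    intro h
    induction h using Nat.strong_induction_on with
    | _ h ih =>
      intro hh
      have halloc : ∀ i : Fin n, alloc s0 i h = if (i : ℕ) < h then 1 else 0 :=
        alloc_of_id s0 h hh.le (fun t ht => ih t ht (ht.trans hh))
      have hj : (p ⟨h, hh⟩ : ℝ≥0∞) / ((alloc s0 ⟨h, hh⟩ h : ℝ≥0∞) + ((0 : NNReal) : ℝ≥0∞)) = ⊤ := by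
        rw [halloc]
        have hv : ((⟨h, hh⟩ : Fin n) : ℕ) = h := rfl
        rw [hv, if_neg (lt_irrefl h)]
        simp only [Nat.cast_zero, ENNReal.coe_zero, add_zero]
        exact ENNReal.div_zero (by exact_mod_cast (hpos ⟨h, hh⟩).ne')
      rcases h0 h ⟨h, hh⟩ with hlt | ⟨heq, hle⟩
      · rw [hj] at hlt; exact absurd hlt (not_top_lt)
      · -- heq : ratio (s0 h) = ratio ⟨h,hh⟩ = ⊤
        rw [hj] at heq
        have hden : alloc s0 (s0 h) h = 0 := by
          by_contra hne
          have h1' : ((alloc s0 (s0 h) h : ℝ≥0∞) + ((0 : NNReal) : ℝ≥0∞)) ≠ 0 := by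
            simp [hne]
          have h2' : (p (s0 h) : ℝ≥0∞) ≠ ⊤ := by simp
          exact absurd heq (ENNReal.div_lt_top h2' h1').ne
        have := halloc (s0 h)
        rw [hden] at this
        have hge : ¬ ((s0 h : ℕ) < h) := by
          intro hlt'; rw [if_pos hlt'] at this; omega
        have : h ≤ (s0 h : ℕ) := Nat.le_of_not_lt hge
        exact Fin.le_antisymm hle (by exact this)
  have step : ∀ h : ℕ, (∀ i, alloc s0 i (h + n) = alloc s1 i h + 1) → s0 (h + n) = s1 h := by
    intro h hA
    apply winner_unique (fun j => (p j : ℝ≥0∞) / ((alloc s1 j h : ℝ≥0∞) + 1))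
    · intro j
      have := h0 (h + n) j
      simpa [hA, Nat.cast_add, Nat.cast_one, add_zero] using this
    · intro j
      simpa using h1 h j
  have inv : ∀ h : ℕ, ∀ i, alloc s0 i (h + n) = alloc s1 i h + 1 := by
    intro h
    induction h with
    | zero =>
      intro i
      have h1' : alloc s0 i (0 + n) = 1 := by
        rw [Nat.zero_add, alloc_of_id s0 n le_rfl (fun t ht => part1 t ht)]
        simp [i.isLt]
      have h2' : alloc s1 i 0 = 0 := by simp [alloc]
      rw [h1', h2']
    | succ h ih =>
      intro i
      have hs := step h ih
      have : h + 1 + n = (h + n) + 1 := by omega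
      rw [this, alloc_succ, alloc_succ, ih, hs]
      rcases eq_or_ne (s1 h) i with he | he <;> simp [he]
  exact ⟨part1, fun h => step h (inv h)⟩
end

section
/- For coprime p_1 > p_2 + 1, the two-party apportionment sequence is constant as a function of the cut point on each interval [ℓ/(p_1 − p_2), (ℓ+1)/(p_1 − p_2)) for ℓ = 0, 1, ..., p_1 − p_2 − 1, and sequences corresponding to distinct such intervals are distinct. -/
/-- Partial sum `Σ_{j≤i} k_j` of run lengths of the two-party sequence for cut
point `c`: `runSum p1 p2 c i = ⌊(p_1/p_2)(i−1) + (p_1−p_2)c/p_2⌋ + 1`. -/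
noncomputable def runSum (p1 p2 : ℕ) (c : ℝ) (i : ℕ) : ℤ :=
  ⌊(p1 : ℝ) / p2 * ((i : ℝ) - 1) + ((p1 : ℝ) - p2) * c / p2⌋ + 1

lemma floor_key (p2 : ℕ) (hp2 : 0 < p2) (M : ℤ) (y : ℝ) (hy0 : 0 ≤ y) (hy1 : y < 1) :
    ⌊((M : ℝ) + y) / (p2 : ℝ)⌋ = M / (p2 : ℤ) := by
  have hp2' : (0 : ℤ) < (p2 : ℤ) := by exact_mod_cast hp2
  set q : ℤ := M / (p2 : ℤ) with hq
  have hdm := Int.mul_ediv_add_emod M (p2 : ℤ)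
  have h0 : 0 ≤ M % (p2 : ℤ) := Int.emod_nonneg M (by omega)
  have h1 : M % (p2 : ℤ) < p2 := Int.emod_lt_of_pos M hp2'
  have hq1 : (p2 : ℤ) * q ≤ M := by linarith
  have hq2 : M + 1 ≤ (q + 1) * (p2 : ℤ) := by nlinarith
  have hp2r : (0 : ℝ) < (p2 : ℝ) := by exact_mod_cast hp2
  have r1 : (p2 : ℝ) * (q : ℝ) ≤ (M : ℝ) := by exact_mod_cast hq1
  have r2 : (M : ℝ) + 1 ≤ ((q : ℝ) + 1) * (p2 : ℝ) := by exact_mod_cast hq2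
  rw [Int.floor_eq_iff]
  constructor
  · rw [le_div_iff₀ hp2r]; nlinarith
  · rw [div_lt_iff₀ hp2r]; nlinarith

lemma runSum_eq (p1 p2 : ℕ) (hp2 : 0 < p2) (hlt : p2 < p1) (ℓ : ℕ) (c : ℝ)
    (h1 : (ℓ : ℝ) / ((p1 : ℝ) - p2) ≤ c) (h2 : c < ((ℓ : ℝ) + 1) / ((p1 : ℝ) - p2))
    (i : ℕ) (hi : 1 ≤ i) :
    runSum p1 p2 c i = ((p1 : ℤ) * (i - 1 : ℕ) + ℓ) / (p2 : ℤ) + 1 := by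
  have hD : (0 : ℝ) < (p1 : ℝ) - p2 := by
    have : (p2 : ℝ) < p1 := by exact_mod_cast hlt
    linarith
  have hx0 : (ℓ : ℝ) ≤ ((p1 : ℝ) - p2) * c := by
    rw [div_le_iff₀ hD] at h1; linarith [h1]
  have hx1 : ((p1 : ℝ) - p2) * c < (ℓ : ℝ) + 1 := by
    rw [lt_div_iff₀ hD] at h2; linarith [h2]
  set y : ℝ := ((p1 : ℝ) - p2) * c - ℓ with hy
  have hy0 : 0 ≤ y := by simp [hy]; linarith
  have hy1 : y < 1 := by simp [hy]; linarith
  have hcast : ((i : ℝ) - 1) = ((i - 1 : ℕ) : ℝ) := by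
    rw [Nat.cast_sub hi]; norm_num
  have hexpr : (p1 : ℝ) / p2 * ((i : ℝ) - 1) + ((p1 : ℝ) - p2) * c / p2
      = ((((p1 : ℤ) * (i - 1 : ℕ) + ℓ : ℤ) : ℝ) + y) / (p2 : ℝ) := by
    have hp2r : (p2 : ℝ) ≠ 0 := by positivity
    rw [hcast]
    push_cast
    field_simp
    ring
  unfold runSum
  rw [hexpr, floor_key p2 hp2 _ y hy0 hy1]

lemma aux2 (p1 p2 : ℕ) (hco : Nat.Coprime p1 p2) (hp2 : 0 < p2) (ℓ ℓ' : ℕ)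
    (h : ℓ < ℓ') :
    ∃ a : ℕ, a < p2 ∧ ((p1 : ℤ) * a + ℓ) / (p2 : ℤ) < ((p1 : ℤ) * a + ℓ') / (p2 : ℤ) := by
  haveI : NeZero p2 := ⟨hp2.ne'⟩
  have hu : IsUnit ((p1 : ZMod p2)) := by
    rw [ZMod.isUnit_iff_coprime]; exact hco
  set u : ZMod p2 := (p1 : ZMod p2)
  set tgt : ZMod p2 := -((ℓ : ZMod p2) + 1)
  refine ⟨(u⁻¹ * tgt).val, ZMod.val_lt _, ?_⟩
  set a : ℕ := (u⁻¹ * tgt).val with ha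
  have hcast : ((a : ℕ) : ZMod p2) = u⁻¹ * tgt := by
    simp only [ha]; exact ZMod.natCast_rightInverse (n := p2) (u⁻¹ * tgt)
  have hmul : u * (a : ZMod p2) = tgt := by
    rw [hcast, ← mul_assoc, ZMod.mul_inv_of_unit u hu, one_mul]
  have hdvd : p2 ∣ p1 * a + ℓ + 1 := by
    have : ((p1 * a + ℓ + 1 : ℕ) : ZMod p2) = 0 := by
      push_cast
      rw [hmul]
      simp [tgt]
    exact (ZMod.natCast_eq_zero_iff _ _).mp this
  obtain ⟨t, ht⟩ := hdvd
  have hp2' : (0 : ℤ) < (p2 : ℤ) := by exact_mod_cast hp2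
  have htZ : (p1 : ℤ) * a + ℓ + 1 = (p2 : ℤ) * t := by exact_mod_cast ht
  -- LHS: (p2*t - 1)/p2 = t - 1
  have hL : ((p1 : ℤ) * a + ℓ) / (p2 : ℤ) = (t : ℤ) - 1 := by
    have : (p1 : ℤ) * a + ℓ = ((p2 : ℤ) - 1) + ((t : ℤ) - 1) * p2 := by ring_nf; omega
    rw [this, Int.add_mul_ediv_right _ _ (by omega : (p2 : ℤ) ≠ 0),
      Int.ediv_eq_zero_of_lt (by omega) (by omega)]
    ring
  -- RHS ≥ t
  have hR : (t : ℤ) ≤ ((p1 : ℤ) * a + ℓ') / (p2 : ℤ) := by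
    have h1 : (p2 : ℤ) * t ≤ (p1 : ℤ) * a + ℓ' := by
      have : (ℓ : ℤ) + 1 ≤ ℓ' := by exact_mod_cast h
      omega
    calc (t : ℤ) = (p2 : ℤ) * t / p2 := (Int.mul_ediv_cancel_left _ (by omega)).symm
      _ ≤ ((p1 : ℤ) * a + ℓ') / (p2 : ℤ) := Int.ediv_le_ediv hp2' h1
  omega

/-- For coprime `p_1 > p_2 + 1`, the two-party apportionment sequence (encoded
by its run-length partial sums) is constant on each interval
`[ℓ/(p_1−p_2), (ℓ+1)/(p_1−p_2))`, `ℓ = 0, …, p_1−p_2−1`, and sequences for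
distinct such intervals are distinct. -/
theorem constant_on_intervals_and_distinct (p1 p2 : ℕ) (hco : Nat.Coprime p1 p2)
    (hp2 : 0 < p2) (hgt : p2 + 1 < p1) :
    (∀ ℓ : ℕ, ℓ < p1 - p2 → ∀ c c' : ℝ,
      (ℓ : ℝ) / ((p1 : ℝ) - p2) ≤ c → c < ((ℓ : ℝ) + 1) / ((p1 : ℝ) - p2) →
      (ℓ : ℝ) / ((p1 : ℝ) - p2) ≤ c' → c' < ((ℓ : ℝ) + 1) / ((p1 : ℝ) - p2) →
      ∀ i, 1 ≤ i → i ≤ p2 → runSum p1 p2 c i = runSum p1 p2 c' i) ∧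
    (∀ ℓ ℓ' : ℕ, ℓ < p1 - p2 → ℓ' < p1 - p2 → ℓ ≠ ℓ' → ∀ c c' : ℝ,
      (ℓ : ℝ) / ((p1 : ℝ) - p2) ≤ c → c < ((ℓ : ℝ) + 1) / ((p1 : ℝ) - p2) →
      (ℓ' : ℝ) / ((p1 : ℝ) - p2) ≤ c' → c' < ((ℓ' : ℝ) + 1) / ((p1 : ℝ) - p2) →
      ∃ i, 1 ≤ i ∧ i ≤ p2 ∧ runSum p1 p2 c i ≠ runSum p1 p2 c' i) := by
  have hlt : p2 < p1 := by omega
  constructor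
  · intro ℓ _ c c' hc1 hc2 hc1' hc2' i hi _
    rw [runSum_eq p1 p2 hp2 hlt ℓ c hc1 hc2 i hi,
      runSum_eq p1 p2 hp2 hlt ℓ c' hc1' hc2' i hi]
  · intro ℓ ℓ' _ _ hne c c' hc1 hc2 hc1' hc2'
    rcases lt_or_gt_of_ne hne with hll | hll
    · obtain ⟨a, halt, hdiff⟩ := aux2 p1 p2 hco hp2 ℓ ℓ' hll
      refine ⟨a + 1, by omega, by omega, ?_⟩
      rw [runSum_eq p1 p2 hp2 hlt ℓ c hc1 hc2 (a + 1) (by omega),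
        runSum_eq p1 p2 hp2 hlt ℓ' c' hc1' hc2' (a + 1) (by omega)]
      simp only [Nat.add_sub_cancel]
      omega
    · obtain ⟨a, halt, hdiff⟩ := aux2 p1 p2 hco hp2 ℓ' ℓ hll
      refine ⟨a + 1, by omega, by omega, ?_⟩
      rw [runSum_eq p1 p2 hp2 hlt ℓ c hc1 hc2 (a + 1) (by omega),
        runSum_eq p1 p2 hp2 hlt ℓ' c' hc1' hc2' (a + 1) (by omega)]
      simp only [Nat.add_sub_cancel]
      omega
end

section
/- Suppose p_1 > p_2 + 1 are coprime, p_1 = a·p_2 + b with 0 < b < p_2, and c ∈ [ℓ/(p_1−p_2), (ℓ+1)/(p_1−p_2)) with ℓ = ν·p_2 + ℓ′, 0 ≤ ℓ′ < p_2. Then k_1 = ν + 1 and, for 2 ≤ i ≤ p_2, k_i = a + 1 if i = ⌈(j·p_2 − ℓ′)/b⌉ + 1 for some j ∈ {1, ..., b}, and k_i = a otherwise; in particular the values k_2, ..., k_{p_2} depend only on ℓ′ and b, not on ν. -/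
theorem runSum_eq_ediv (p1 p2 : ℕ) (c : ℝ) (i : ℕ) :
    runSum p1 p2 c i = (p1 * ((i : ℤ) - 1) + ⌊((p1 : ℝ) - p2) * c⌋) / p2 + 1 := by
  have hsplit : (p1 : ℝ) / p2 * ((i : ℝ) - 1) + ((p1 : ℝ) - p2) * c / p2 =
      (((p1 * ((i : ℤ) - 1) : ℤ) : ℝ) + ((p1 : ℝ) - p2) * c) / p2 := by
    push_cast; ring
  rw [runSum, hsplit, Int.floor_div_natCast, Int.floor_intCast_add]

theorem floor_mul_eq_of_div_le_of_lt_div {K : Type*} [Field K] [LinearOrder K]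
    [IsStrictOrderedRing K] [FloorRing K] {d c : K} {ℓ : ℕ} (hd : 0 < d)
    (h₁ : (ℓ : K) / d ≤ c) (h₂ : c < ((ℓ : K) + 1) / d) : ⌊d * c⌋ = ℓ := by
  rw [div_le_iff₀ hd] at h₁
  rw [lt_div_iff₀ hd] at h₂
  rw [Int.floor_eq_iff]
  push_cast
  constructor <;> linarith

namespace Int

theorem ediv_lt_ediv_iff_exists_mul {m n p : ℤ} (hp : 0 < p) :
    m / p < n / p ↔ ∃ j, m < j * p ∧ j * p ≤ n := by
  constructor
  · intro h
    exact ⟨n / p, (Int.ediv_lt_iff_lt_mul hp).1 h, Int.ediv_mul_le n hp.ne'⟩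
  · rintro ⟨j, hmj, hjn⟩
    exact ((Int.ediv_lt_iff_lt_mul hp).2 hmj).trans_le ((Int.le_ediv_iff_mul_le hp).2 hjn)

theorem add_ediv_le_ediv_add_one {m b p : ℤ} (hp : 0 < p) (hbp : b ≤ p) :
    (m + b) / p ≤ m / p + 1 :=
  calc (m + b) / p ≤ (m + 1 * p) / p := Int.ediv_le_ediv hp (by linarith)
    _ = m / p + 1 := Int.add_mul_ediv_right _ _ hp.ne'

open Classical in
theorem add_ediv_sub_ediv_eq_ite {m b p : ℤ} (hp : 0 < p) (hb : 0 ≤ b) (hbp : b ≤ p) :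
    (m + b) / p - m / p = if ∃ j, m < j * p ∧ j * p ≤ m + b then 1 else 0 := by
  have hmono : m / p ≤ (m + b) / p := Int.ediv_le_ediv hp (by linarith)
  have hstep := add_ediv_le_ediv_add_one (m := m) hp hbp
  split_ifs with h
  · have := (ediv_lt_ediv_iff_exists_mul hp).2 h
    omega
  · have := mt (ediv_lt_ediv_iff_exists_mul hp).1 h
    omega

theorem ceil_intCast_div_natCast_eq_iff {x k : ℤ} {b : ℕ} (hb : 0 < b) :
    ⌈(x : ℚ) / b⌉ = k ↔ (k - 1) * b < x ∧ x ≤ k * b := by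
  have hb' : (0 : ℚ) < b := by exact_mod_cast hb
  rw [Int.ceil_eq_iff, lt_div_iff₀ hb', div_le_iff₀ hb']
  norm_cast

end Int

theorem exists_ceil_eq_iff_exists_mul {p2 b ℓ' i : ℕ} (hl' : ℓ' < p2) (h2 : 2 ≤ i)
    (hip : i ≤ p2) :
    (∃ j, 1 ≤ j ∧ j ≤ b ∧ (i : ℤ) = ⌈(((j * p2 : ℕ) : ℚ) - (ℓ' : ℚ)) / (b : ℚ)⌉ + 1) ↔
      ∃ j : ℤ, b * ((i : ℤ) - 2) + ℓ' < j * p2 ∧ j * p2 ≤ b * ((i : ℤ) - 2) + ℓ' + b := by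
  have hcast (j : ℕ) : (((j * p2 : ℕ) : ℚ) - (ℓ' : ℚ)) = ((j * p2 - ℓ' : ℤ) : ℚ) := by
    push_cast; ring
  constructor
  · rintro ⟨j, hj1, hjb, hij⟩
    have hceil : ⌈((j * p2 - ℓ' : ℤ) : ℚ) / b⌉ = i - 1 := by
      rw [← hcast]; omega
    rw [Int.ceil_intCast_div_natCast_eq_iff (by omega)] at hceil
    exact ⟨j, by linarith [hceil.1], by linarith [hceil.2]⟩
  · rintro ⟨j, hlo, hhi⟩
    have hp2 : (0 : ℤ) < p2 := by omega
    have hi2 : (0 : ℤ) ≤ i - 2 := by omega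
    have hj1 : 1 ≤ j := by
      by_contra! hj
      nlinarith
    have hjb : j ≤ b := by
      have hi : (i : ℤ) - 1 ≤ p2 := by omega
      have : j * p2 < (b + 1) * p2 := by nlinarith
      have := lt_of_mul_lt_mul_right this hp2.le
      omega
    lift j to ℕ using (by omega)
    refine ⟨j, by omega, by omega, ?_⟩
    have hceil : ⌈((j * p2 - ℓ' : ℤ) : ℚ) / b⌉ = i - 1 :=
      (Int.ceil_intCast_div_natCast_eq_iff (by omega)).2 ⟨by linarith, by linarith⟩
    rw [hcast]
    omega

section RunLengths

variable {p1 p2 a b ν ℓ' : ℕ} {c : ℝ}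

theorem runSum_eq_s19 (hp2 : 0 < p2) (hgt : p2 < p1) (hdiv : p1 = a * p2 + b)
    (hc1 : ((ν * p2 + ℓ' : ℕ) : ℝ) / ((p1 : ℝ) - p2) ≤ c)
    (hc2 : c < (((ν * p2 + ℓ' : ℕ) : ℝ) + 1) / ((p1 : ℝ) - p2)) (i : ℕ) :
    runSum p1 p2 c i = a * ((i : ℤ) - 1) + ν + (b * ((i : ℤ) - 1) + ℓ') / p2 + 1 := by
  have hd : (0 : ℝ) < p1 - p2 := sub_pos.2 (by exact_mod_cast hgt)
  rw [runSum_eq_ediv, floor_mul_eq_of_div_le_of_lt_div hd hc1 hc2, hdiv]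
  have hp2' : (p2 : ℤ) ≠ 0 := by exact_mod_cast hp2.ne'
  have hregroup : ((a * p2 + b : ℕ) : ℤ) * ((i : ℤ) - 1) + ((ν * p2 + ℓ' : ℕ) : ℤ) =
      (b * ((i : ℤ) - 1) + ℓ') + (a * ((i : ℤ) - 1) + ν) * p2 := by
    push_cast; ring
  rw [hregroup, Int.add_mul_ediv_right _ _ hp2']
  ring

theorem runSum_one (hgt : p2 < p1) (hdiv : p1 = a * p2 + b) (hl' : ℓ' < p2)
    (hc1 : ((ν * p2 + ℓ' : ℕ) : ℝ) / ((p1 : ℝ) - p2) ≤ c)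
    (hc2 : c < (((ν * p2 + ℓ' : ℕ) : ℝ) + 1) / ((p1 : ℝ) - p2)) :
    runSum p1 p2 c 1 = ν + 1 := by
  rw [runSum_eq_s19 (by omega) hgt hdiv hc1 hc2]
  have : (ℓ' : ℤ) / p2 = 0 := Int.ediv_eq_zero_of_lt (by positivity) (by exact_mod_cast hl')
  simp [this]

open Classical in
theorem runSum_sub_runSum_pred (hgt : p2 < p1) (hdiv : p1 = a * p2 + b) (hbp : b < p2)
    (hl' : ℓ' < p2) (hc1 : ((ν * p2 + ℓ' : ℕ) : ℝ) / ((p1 : ℝ) - p2) ≤ c)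
    (hc2 : c < (((ν * p2 + ℓ' : ℕ) : ℝ) + 1) / ((p1 : ℝ) - p2)) {i : ℕ} (h2 : 2 ≤ i)
    (hip : i ≤ p2) :
    runSum p1 p2 c i - runSum p1 p2 c (i - 1) = a +
      if ∃ j, 1 ≤ j ∧ j ≤ b ∧ (i : ℤ) = ⌈(((j * p2 : ℕ) : ℚ) - (ℓ' : ℚ)) / (b : ℚ)⌉ + 1
      then 1 else 0 := by
  have hp2 : (0 : ℤ) < p2 := by omega
  rw [runSum_eq_s19 (by omega) hgt hdiv hc1 hc2, runSum_eq_s19 (by omega) hgt hdiv hc1 hc2,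
    Nat.cast_sub (by omega), exists_ceil_eq_iff_exists_mul hl' h2 hip,
    ← Int.add_ediv_sub_ediv_eq_ite hp2 (by positivity) (by omega)]
  have hshift : (b : ℤ) * ((i : ℤ) - 1) + ℓ' = b * ((i : ℤ) - 2) + ℓ' + b := by ring
  rw [hshift]
  push_cast
  ring_nf

end RunLengths

theorem run_lengths_on_interval_general (p1 p2 a b ν ℓ' : ℕ) (hgt : p2 + 1 < p1)
    (hdiv : p1 = a * p2 + b) (hbp : b < p2)
    (hl' : ℓ' < p2)
    (c : ℝ)
    (hc1 : ((ν * p2 + ℓ' : ℕ) : ℝ) / ((p1 : ℝ) - p2) ≤ c)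
    (hc2 : c < (((ν * p2 + ℓ' : ℕ) : ℝ) + 1) / ((p1 : ℝ) - p2)) :
    runSum p1 p2 c 1 = ν + 1 ∧
    (∀ i, 2 ≤ i → i ≤ p2 →
      ((∃ j, 1 ≤ j ∧ j ≤ b ∧
          (i : ℤ) = ⌈(((j * p2 : ℕ) : ℚ) - (ℓ' : ℚ)) / (b : ℚ)⌉ + 1) →
        runSum p1 p2 c i - runSum p1 p2 c (i - 1) = a + 1) ∧
      (¬ (∃ j, 1 ≤ j ∧ j ≤ b ∧
          (i : ℤ) = ⌈(((j * p2 : ℕ) : ℚ) - (ℓ' : ℚ)) / (b : ℚ)⌉ + 1) →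
        runSum p1 p2 c i - runSum p1 p2 c (i - 1) = a)) ∧
    (∀ ν₂ : ℕ, ∀ c₂ : ℝ, ν₂ * p2 + ℓ' < p1 - p2 →
      ((ν₂ * p2 + ℓ' : ℕ) : ℝ) / ((p1 : ℝ) - p2) ≤ c₂ →
      c₂ < (((ν₂ * p2 + ℓ' : ℕ) : ℝ) + 1) / ((p1 : ℝ) - p2) →
      ∀ i, 2 ≤ i → i ≤ p2 →
        runSum p1 p2 c i - runSum p1 p2 c (i - 1) =
          runSum p1 p2 c₂ i - runSum p1 p2 c₂ (i - 1)) := by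
  have hlt : p2 < p1 := by omega
  refine ⟨runSum_one hlt hdiv hl' hc1 hc2, fun i h2 hip => ⟨fun hjump => ?_, fun hjump => ?_⟩,
    fun ν₂ c₂ _ hc1₂ hc2₂ i h2 hip => ?_⟩
  · rw [runSum_sub_runSum_pred hlt hdiv hbp hl' hc1 hc2 h2 hip, if_pos hjump]
  · rw [runSum_sub_runSum_pred hlt hdiv hbp hl' hc1 hc2 h2 hip, if_neg hjump, add_zero]
  · rw [runSum_sub_runSum_pred hlt hdiv hbp hl' hc1 hc2 h2 hip,
      runSum_sub_runSum_pred hlt hdiv hbp hl' hc1₂ hc2₂ h2 hip]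

/-- For coprime `p_1 > p_2 + 1` with `p_1 = a·p_2 + b`, `0 < b < p_2`, and cut
point `c ∈ [ℓ/(p_1−p_2), (ℓ+1)/(p_1−p_2))` where `ℓ = ν·p_2 + ℓ′`, `ℓ′ < p_2`:
the run lengths satisfy `k_1 = ν + 1` and, for `2 ≤ i ≤ p_2`, `k_i = a + 1` if
`i = ⌈(j·p_2 − ℓ′)/b⌉ + 1` for some `j ∈ {1, …, b}` and `k_i = a` otherwise;
in particular `k_2, …, k_{p_2}` depend only on `ℓ′` and `b`, not on `ν`. -/
theorem run_lengths_on_interval (p1 p2 a b ν ℓ' : ℕ) (hco : Nat.Coprime p1 p2)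
    (hp2 : 0 < p2) (hgt : p2 + 1 < p1)
    (hdiv : p1 = a * p2 + b) (hb0 : 0 < b) (hbp : b < p2)
    (hl' : ℓ' < p2) (hl : ν * p2 + ℓ' < p1 - p2)
    (c : ℝ)
    (hc1 : ((ν * p2 + ℓ' : ℕ) : ℝ) / ((p1 : ℝ) - p2) ≤ c)
    (hc2 : c < (((ν * p2 + ℓ' : ℕ) : ℝ) + 1) / ((p1 : ℝ) - p2)) :
    runSum p1 p2 c 1 = ν + 1 ∧
    (∀ i, 2 ≤ i → i ≤ p2 →
      ((∃ j, 1 ≤ j ∧ j ≤ b ∧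
          (i : ℤ) = ⌈(((j * p2 : ℕ) : ℚ) - (ℓ' : ℚ)) / (b : ℚ)⌉ + 1) →
        runSum p1 p2 c i - runSum p1 p2 c (i - 1) = a + 1) ∧
      (¬ (∃ j, 1 ≤ j ∧ j ≤ b ∧
          (i : ℤ) = ⌈(((j * p2 : ℕ) : ℚ) - (ℓ' : ℚ)) / (b : ℚ)⌉ + 1) →
        runSum p1 p2 c i - runSum p1 p2 c (i - 1) = a)) ∧
    (∀ ν₂ : ℕ, ∀ c₂ : ℝ, ν₂ * p2 + ℓ' < p1 - p2 →
      ((ν₂ * p2 + ℓ' : ℕ) : ℝ) / ((p1 : ℝ) - p2) ≤ c₂ →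
      c₂ < (((ν₂ * p2 + ℓ' : ℕ) : ℝ) + 1) / ((p1 : ℝ) - p2) →
      ∀ i, 2 ≤ i → i ≤ p2 →
        runSum p1 p2 c i - runSum p1 p2 c (i - 1) =
          runSum p1 p2 c₂ i - runSum p1 p2 c₂ (i - 1)) :=
  run_lengths_on_interval_general p1 p2 a b ν ℓ' hgt hdiv hbp hl' c hc1 hc2
end
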